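/- arXiv:1807.10148 — 7 statements merged into one kernel-verified Lean document; each statement's English description precedes it below -/
import Mathlib

section
/- Let V be a finite-dimensional real vector space, Z ∈ ∧²V, and β a skew-symmetric bilinear form on V with id_V + Z♯ ∘ β♯ invertible. Then the bilinear form F(β) on V defined by F(β)♯ = β♯ ∘ (id + Z♯β♯)⁻¹ is skew-symmetric. -/
open Module

/-- let `V` be a finite-dimensional real vector space, `Z ∈ ∧²V`
(encoded by its skew map `Z♯ : V* → V`) and `β` a skew-symmetric bilinear form on
`V` such that `id_V + Z♯ ∘ β♯` is invertible, with (two-sided) inverse `S`.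
Then the bilinear form `F(β)` with `F(β)♯ = β♯ ∘ (id + Z♯β♯)⁻¹`, i.e. the form
`(v,w) ↦ β(S v, w)`, is again skew-symmetric. -/
theorem F_of_skew_is_skew
    (V : Type*) [AddCommGroup V] [Module ℝ V] [FiniteDimensional ℝ V]
    (Z : Module.Dual ℝ V →ₗ[ℝ] V) (hZ : ∀ ξ χ : Module.Dual ℝ V, ξ (Z χ) = - χ (Z ξ))
    (β : V →ₗ[ℝ] Module.Dual ℝ V) (hβ : ∀ v w : V, β v w = - β w v)
    (S : V →ₗ[ℝ] V)
    (hS₁ : (LinearMap.id + Z ∘ₗ β) ∘ₗ S = LinearMap.id)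
    (hS₂ : S ∘ₗ (LinearMap.id + Z ∘ₗ β) = LinearMap.id) :
    ∀ v w : V, (β ∘ₗ S) v w = - (β ∘ₗ S) w v := by
  have key : ∀ a b : V, β (S a) b = β (S a) (S b) + β (S a) (Z (β (S b))) := by
    intro a b
    have hb : b = S b + Z (β (S b)) := by
      conv_lhs => rw [← LinearMap.id_apply (R := ℝ) b, ← hS₁]
      simp
    conv_lhs => rw [hb]
    simp
  intro v w
  simp only [LinearMap.comp_apply]
  rw [key v w, key w v, hβ (S v) (S w), hZ (β (S v)) (β (S w))]
  ring
end

section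
/- Let η ∈ ∧²V* have kernel K = ker(η♯) and let G be a complement of K in V. Then the subspace G ⊕ K* := {(g, ξ) : g ∈ G, ξ ∈ V* with ξ|_G = 0} ⊆ V ⊕ V* is a Lagrangian subspace transverse to graph(η) = {(v, η♯v) : v ∈ V}. -/
open Module

/-- The canonical symmetric pairing on `V ⊕ V*`: `⟨(v,ξ),(w,χ)⟩ = ξ(w) + χ(v)`. -/
noncomputable def pairing (V : Type*) [AddCommGroup V] [Module ℝ V] :
    (V × Module.Dual ℝ V) →ₗ[ℝ] (V × Module.Dual ℝ V) →ₗ[ℝ] ℝ :=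
  LinearMap.mk₂ ℝ (fun p q => p.2 q.1 + q.2 p.1)
    (by intro m₁ m₂ n; simp; ring)
    (by intro c m n; simp; ring)
    (by intro m n₁ n₂; simp; ring)
    (by intro m c n; simp; ring)

/-!
The isotropy of `G ⊕ G°` is immediate, and both `G ⊕ G°` and `graph η` have dimension `dim V`,
so transversality reduces to `(G ⊕ G°) ∩ graph η = 0`. If `v ∈ G` and `η v ∈ G°`, then `η v`
also kills `ker η` by skew-symmetry, hence kills `ker η ⊕ G = V`; so `v ∈ ker η ∩ G = 0`.
-/

namespace Submodule

variable {R M N : Type*} [Ring R] [AddCommGroup M] [AddCommGroup N] [Module R M] [Module R N]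

def prodEquiv (p : Submodule R M) (q : Submodule R N) : p.prod q ≃ₗ[R] p × q where
  toFun x := (⟨x.1.1, x.2.1⟩, ⟨x.1.2, x.2.2⟩)
  invFun x := ⟨(x.1.1, x.2.1), ⟨x.1.2, x.2.2⟩⟩
  map_add' _ _ := rfl
  map_smul' _ _ := rfl
  left_inv _ := rfl
  right_inv _ := rfl

end Submodule

section FiniteDimensional

variable {K V W : Type*} [Field K] [AddCommGroup V] [Module K V] [AddCommGroup W] [Module K W]

theorem LinearMap.finrank_graph (f : V →ₗ[K] W) : finrank K f.graph = finrank K V := by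
  rw [LinearMap.graph_eq_range_prod, LinearMap.finrank_range_of_inj]
  intro a b hab
  simpa using congrArg Prod.fst hab

theorem Subspace.finrank_prod_dualAnnihilator [FiniteDimensional K V] (U : Subspace K V) :
    finrank K (U.prod U.dualAnnihilator) = finrank K V := by
  have := Module.Free.of_divisionRing K U.dualAnnihilator
  rw [(Submodule.prodEquiv U U.dualAnnihilator).finrank_eq, Module.finrank_prod,
    Subspace.finrank_add_finrank_dualAnnihilator_eq]

end FiniteDimensional

section Skew

variable {K V : Type*} [Field K] [AddCommGroup V] [Module K V]

theorem apply_mem_dualAnnihilator_ker_of_skew {η : V →ₗ[K] Dual K V}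
    (hη : ∀ v w : V, η v w = - η w v) (v : V) : η v ∈ (LinearMap.ker η).dualAnnihilator := by
  rw [Submodule.mem_dualAnnihilator]
  intro k hk
  rw [hη, LinearMap.mem_ker.mp hk, LinearMap.zero_apply, neg_zero]

theorem disjoint_prod_dualAnnihilator_graph_of_skew {η : V →ₗ[K] Dual K V}
    (hη : ∀ v w : V, η v w = - η w v) {G : Submodule K V} (hG : IsCompl (LinearMap.ker η) G) :
    Disjoint (G.prod G.dualAnnihilator) η.graph := by
  rw [Submodule.disjoint_def]
  rintro ⟨v, ξ⟩ ⟨hv, hξ⟩ hgraph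
  rw [LinearMap.mem_graph_iff] at hgraph
  obtain rfl : ξ = η v := hgraph
  have hηv : η v = 0 := by
    have hmem : η v ∈ (LinearMap.ker η ⊔ G).dualAnnihilator := by
      rw [Submodule.dualAnnihilator_sup_eq]
      exact ⟨apply_mem_dualAnnihilator_ker_of_skew hη v, hξ⟩
    rwa [hG.sup_eq_top, Submodule.dualAnnihilator_top, Submodule.mem_bot] at hmem
  have hv0 : v = 0 := by
    have hmem : v ∈ LinearMap.ker η ⊓ G := ⟨hηv, hv⟩
    rwa [hG.inf_eq_bot, Submodule.mem_bot] at hmem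
  simp [hv0]

end Skew

theorem pairing_eq_zero_of_mem_prod_dualAnnihilator {V : Type*} [AddCommGroup V] [Module ℝ V]
    {U : Submodule ℝ V} {p q : V × Dual ℝ V} (hp : p ∈ U.prod U.dualAnnihilator)
    (hq : q ∈ U.prod U.dualAnnihilator) : pairing V p q = 0 := by
  have hpq : p.2 q.1 = 0 := (Submodule.mem_dualAnnihilator _).mp hp.2 _ hq.1
  have hqp : q.2 p.1 = 0 := (Submodule.mem_dualAnnihilator _).mp hq.2 _ hp.1
  simp [pairing, hpq, hqp]

/-- let `η ∈ ∧²V*` have kernel `K = ker η♯` and let `G` be a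
complement of `K` in `V`.  Then `G ⊕ K* := {(g,ξ) : g ∈ G, ξ|_G = 0}` (with `K*`
identified with the annihilator `G°`) is a Lagrangian subspace of `V ⊕ V*`
transverse to `graph(η) = {(v, η♯v) : v ∈ V}`. -/
theorem G_plus_Kstar_lagrangian_transverse_to_graph
    (V : Type*) [AddCommGroup V] [Module ℝ V] [FiniteDimensional ℝ V]
    (η : V →ₗ[ℝ] Module.Dual ℝ V) (hη : ∀ v w : V, η v w = - η w v)
    (G : Submodule ℝ V) (hG : IsCompl (LinearMap.ker η) G) :
    (∀ p ∈ G.prod G.dualAnnihilator, ∀ q ∈ G.prod G.dualAnnihilator,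
        pairing V p q = 0) ∧
    Module.finrank ℝ (G.prod G.dualAnnihilator) = Module.finrank ℝ V ∧
    IsCompl (G.prod G.dualAnnihilator) (LinearMap.graph η) := by
  refine ⟨fun p hp q hq => pairing_eq_zero_of_mem_prod_dualAnnihilator hp hq,
    Subspace.finrank_prod_dualAnnihilator G, ?_⟩
  refine (Submodule.isCompl_iff_disjoint _ _ ?_).mpr
    (disjoint_prod_dualAnnihilator_graph_of_skew hη hG)
  rw [Subspace.finrank_prod_dualAnnihilator, LinearMap.finrank_graph, Module.finrank_prod,
    Subspace.dual_finrank_eq]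
end

section
/- Let η ∈ ∧²V* with kernel K, G a complement of K, and Z ∈ ∧²G the bivector with Z♯ = −(η|_G♯)⁻¹. Then the orthogonal transformation τ_{−η} : V ⊕ V* → V ⊕ V*, (v,ξ) ↦ (v, ξ − η♯v), maps the subspace G ⊕ K* (= G ⊕ G°) onto graph(Z) = {(Z♯ξ, ξ) : ξ ∈ V*}. -/
open Module

/-! For `g ∈ G` and `χ ∈ G°` the image `(g, χ - η♯g)` lies on `graph(Z)` because `Z♯` kills `G°`
and inverts `-η♯` on `G`. Conversely `(Z♯χ, χ)` is the image of `(Z♯χ, χ + η♯Z♯χ)`, and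
`χ + η♯Z♯χ ∈ G°` follows from the skew-symmetry of `η` and `Z` together with `Z♯η♯g = -g`. -/

section

variable {R V : Type*} [CommRing R] [AddCommGroup V] [Module R V]
  {η : V →ₗ[R] Dual R V} {G : Submodule R V} {Z : Dual R V →ₗ[R] V}

lemma apply_sub_apply_eq_of_mem_dualAnnihilator
    (hZann : ∀ ξ : Dual R V, (∀ g ∈ G, ξ g = 0) → Z ξ = 0) (hZη : ∀ g ∈ G, Z (η g) = -g)
    {g : V} (hg : g ∈ G) {χ : Dual R V} (hχ : χ ∈ G.dualAnnihilator) :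
    Z (χ - η g) = g := by
  rw [map_sub, hZann χ ((Submodule.mem_dualAnnihilator χ).1 hχ), hZη g hg, zero_sub, neg_neg]

lemma add_apply_apply_mem_dualAnnihilator (hη : ∀ v w : V, η v w = - η w v)
    (hZskew : ∀ ξ χ : Dual R V, ξ (Z χ) = - χ (Z ξ)) (hZη : ∀ g ∈ G, Z (η g) = -g)
    (χ : Dual R V) : χ + η (Z χ) ∈ G.dualAnnihilator := by
  refine (Submodule.mem_dualAnnihilator _).2 fun g hg => ?_
  have hχg : χ g = η g (Z χ) := by
    simpa [hZη g hg] using hZskew χ (η g)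
  rw [LinearMap.add_apply, hχg, hη, neg_add_cancel]

end

theorem tau_minus_eta_maps_G_Kstar_to_graphZ_general
    (V : Type*) [AddCommGroup V] [Module ℝ V]
    (η : V →ₗ[ℝ] Module.Dual ℝ V) (hη : ∀ v w : V, η v w = - η w v)
    (G : Submodule ℝ V)
    (Z : Module.Dual ℝ V →ₗ[ℝ] V)
    (hZskew : ∀ ξ χ : Module.Dual ℝ V, ξ (Z χ) = - χ (Z ξ))
    (hZG : ∀ ξ : Module.Dual ℝ V, Z ξ ∈ G)
    (hZann : ∀ ξ : Module.Dual ℝ V, (∀ g ∈ G, ξ g = 0) → Z ξ = 0)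
    (hZη : ∀ g ∈ G, Z (η g) = -g) :
    Submodule.map
        ((LinearMap.fst ℝ V (Module.Dual ℝ V)).prod
          (LinearMap.snd ℝ V (Module.Dual ℝ V) - η ∘ₗ LinearMap.fst ℝ V (Module.Dual ℝ V)))
        (G.prod G.dualAnnihilator)
      = LinearMap.range (Z.prod LinearMap.id) := by
  ext ⟨v, ξ⟩
  simp only [Submodule.mem_map, Submodule.mem_prod, LinearMap.mem_range, LinearMap.prod_apply,
    Function.prod, LinearMap.fst_apply, LinearMap.snd_apply, LinearMap.sub_apply,
    LinearMap.comp_apply, LinearMap.id_apply, Prod.mk.injEq, Prod.exists]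
  constructor
  · rintro ⟨g, χ, ⟨hg, hχ⟩, rfl, rfl⟩
    exact ⟨χ - η g, apply_sub_apply_eq_of_mem_dualAnnihilator hZann hZη hg hχ, rfl⟩
  · rintro ⟨χ, rfl, rfl⟩
    exact ⟨Z χ, χ + η (Z χ), ⟨hZG χ, add_apply_apply_mem_dualAnnihilator hη hZskew hZη χ⟩,
      rfl, add_sub_cancel_right χ _⟩

/-- with `η ∈ ∧²V*`, `K = ker η♯`, `G` a complement of `K`, and
`Z ∈ ∧²G` the bivector with `Z♯ = -(η|_G♯)⁻¹`, the orthogonal transformation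
`τ_{-η} : (v,ξ) ↦ (v, ξ - η♯v)` maps `G ⊕ K* = G × G°` onto
`graph(Z) = {(Z♯ξ, ξ) : ξ ∈ V*}`. -/
theorem tau_minus_eta_maps_G_Kstar_to_graphZ
    (V : Type*) [AddCommGroup V] [Module ℝ V] [FiniteDimensional ℝ V]
    (η : V →ₗ[ℝ] Module.Dual ℝ V) (hη : ∀ v w : V, η v w = - η w v)
    (G : Submodule ℝ V) (hG : IsCompl (LinearMap.ker η) G)
    (Z : Module.Dual ℝ V →ₗ[ℝ] V)
    (hZskew : ∀ ξ χ : Module.Dual ℝ V, ξ (Z χ) = - χ (Z ξ))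
    (hZG : ∀ ξ : Module.Dual ℝ V, Z ξ ∈ G)
    (hZann : ∀ ξ : Module.Dual ℝ V, (∀ g ∈ G, ξ g = 0) → Z ξ = 0)
    (hZη : ∀ g ∈ G, Z (η g) = -g) :
    Submodule.map
        ((LinearMap.fst ℝ V (Module.Dual ℝ V)).prod
          (LinearMap.snd ℝ V (Module.Dual ℝ V) - η ∘ₗ LinearMap.fst ℝ V (Module.Dual ℝ V)))
        (G.prod G.dualAnnihilator)
      = LinearMap.range (Z.prod LinearMap.id) :=
  tau_minus_eta_maps_G_Kstar_to_graphZ_general V η hη G Z hZskew hZG hZann hZη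
end

section
/- Let η ∈ ∧²V* with kernel K, G a complement of K, Z ∈ ∧²G with Z♯ = −(η|_G♯)⁻¹, and β ∈ I_Z. Write β = (μ, σ) with μ ∈ K* ⊗ G* and σ ∈ ∧²G* (so β vanishes on ∧²K). Then the kernel of the skew form exp_η(β) := η + F(β) equals the graph of the linear map Z♯μ♯ = −(η|_G♯)⁻¹ μ♯ : K → G, i.e., ker(exp_η(β)♯) = {k + Z♯(μ♯k) : k ∈ K}. -/
open Module

/-- let `η ∈ ∧²V*` with kernel `K = ker η♯`, `G` a complement of `K`,
`Z ∈ ∧²G` with `Z♯ = -(η|_G♯)⁻¹`, and `β ∈ I_Z` (with two-sided inverse `S` of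
`id + Z♯β♯`) a 2-form vanishing on `∧²K` (i.e. `β = (μ,σ)` with `μ ∈ K*⊗G*`,
`σ ∈ ∧²G*`).  Then the kernel of `exp_η(β) = η + F(β)` is the graph of
`Z♯μ♯ : K → G`, i.e. `ker((η + F(β))♯) = {k + Z♯(β♯k) : k ∈ K} = (id + Z♯β♯)(K)`. -/
theorem ker_exp_eta_eq_graph
    (V : Type*) [AddCommGroup V] [Module ℝ V] [FiniteDimensional ℝ V]
    (η : V →ₗ[ℝ] Module.Dual ℝ V) (hη : ∀ v w : V, η v w = - η w v)
    (G : Submodule ℝ V) (hG : IsCompl (LinearMap.ker η) G)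
    (Z : Module.Dual ℝ V →ₗ[ℝ] V)
    (hZskew : ∀ ξ χ : Module.Dual ℝ V, ξ (Z χ) = - χ (Z ξ))
    (hZG : ∀ ξ : Module.Dual ℝ V, Z ξ ∈ G)
    (hZann : ∀ ξ : Module.Dual ℝ V, (∀ g ∈ G, ξ g = 0) → Z ξ = 0)
    (hZη : ∀ g ∈ G, Z (η g) = -g)
    (β : V →ₗ[ℝ] Module.Dual ℝ V) (hβ : ∀ v w : V, β v w = - β w v)
    (hβK : ∀ k₁ ∈ LinearMap.ker η, ∀ k₂ ∈ LinearMap.ker η, β k₁ k₂ = 0)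
    (S : V →ₗ[ℝ] V)
    (hS₁ : (LinearMap.id + Z ∘ₗ β) ∘ₗ S = LinearMap.id)
    (hS₂ : S ∘ₗ (LinearMap.id + Z ∘ₗ β) = LinearMap.id) :
    LinearMap.ker (η + β ∘ₗ S) =
      Submodule.map (LinearMap.id + Z ∘ₗ β) (LinearMap.ker η) := by
  -- decomposition of any vector
  have hdec : ∀ w : V, ∃ k ∈ LinearMap.ker η, ∃ g ∈ G, w = k + g := by
    intro w
    have : w ∈ LinearMap.ker η ⊔ G := by
      rw [hG.sup_eq_top]; trivial
    obtain ⟨k, hk, g, hg, hkg⟩ := Submodule.mem_sup.mp this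
    exact ⟨k, hk, g, hg, hkg.symm⟩
  -- key fact: η (Z ξ) (k + g) = - ξ g
  have keyA : ∀ (ξ : Module.Dual ℝ V), ∀ k ∈ LinearMap.ker η, ∀ g ∈ G,
      η (Z ξ) (k + g) = - ξ g := by
    intro ξ k hk g hg
    have hk0 : η k = 0 := hk
    rw [hη (Z ξ) (k + g), map_add, hk0]
    simp only [LinearMap.add_apply, LinearMap.zero_apply, zero_add]
    rw [hZskew (η g) ξ, hZη g hg, map_neg]
    ring
  ext v
  simp only [LinearMap.mem_ker, Submodule.mem_map]
  constructor
  · intro hv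
    set u := S v with hu
    have hvu : v = u + Z (β u) := by
      have := LinearMap.congr_fun hS₁ v
      simp only [LinearMap.comp_apply, LinearMap.add_apply, LinearMap.id_apply] at this
      exact this.symm
    have heq : ∀ w : V, η u w + η (Z (β u)) w + β u w = 0 := by
      intro w
      have h0 := LinearMap.congr_fun hv w
      simp only [LinearMap.add_apply, LinearMap.comp_apply, LinearMap.zero_apply] at h0
      rw [hvu, map_add] at h0
      simp only [LinearMap.add_apply] at h0
      rw [← hvu, ← hu] at h0
      linarith
    have hG0 : ∀ g ∈ G, η u g = 0 := by
      intro g hg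
      have h0 : (0 : V) ∈ LinearMap.ker η := Submodule.zero_mem _
      have hA := keyA (β u) 0 h0 g hg
      rw [zero_add] at hA
      have := heq g
      rw [hA] at this; linarith
    have huK : u ∈ LinearMap.ker η := by
      obtain ⟨k, hk, g, hg, hkg⟩ := hdec u
      have hgK : η g = 0 := by
        ext w
        obtain ⟨k', hk', g', hg', hkg'⟩ := hdec w
        have e1 : η g g' = 0 := by
          have h2 := hG0 g' hg'
          rw [hkg, map_add, LinearMap.add_apply] at h2
          have hk0 : η k = 0 := hk
          rw [hk0] at h2; simpa using h2
        have e2 : η g k' = 0 := by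
          rw [hη g k']
          have hk'0 : η k' = 0 := hk'
          rw [hk'0]; simp
        rw [hkg', map_add, e2, e1]; simp
      have hg0 : g = 0 := by
        have : g ∈ LinearMap.ker η ⊓ G := ⟨hgK, hg⟩
        rwa [hG.inf_eq_bot, Submodule.mem_bot] at this
      rw [hkg, hg0, add_zero]; exact hk
    refine ⟨u, huK, ?_⟩
    simp only [LinearMap.add_apply, LinearMap.comp_apply, LinearMap.id_apply]
    exact hvu.symm
  · rintro ⟨k, hk, rfl⟩
    have hSk : S (k + Z (β k)) = k := by
      have := LinearMap.congr_fun hS₂ k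
      simpa [LinearMap.comp_apply, LinearMap.add_apply, LinearMap.id_apply] using this
    ext w
    obtain ⟨k', hk', g', hg', hkg'⟩ := hdec w
    simp only [LinearMap.add_apply, LinearMap.comp_apply, LinearMap.id_apply,
      LinearMap.zero_apply, hSk]
    have hk0 : η k = 0 := hk
    rw [map_add, hk0]
    simp only [LinearMap.add_apply, LinearMap.zero_apply, zero_add]
    rw [hkg', keyA (β k) k' hk' g' hg']
    have hβ0 : β k k' = 0 := hβK k hk k' hk'
    simp [map_add, hβ0]
end

section
/- Let η ∈ ∧²V* have rank k, K = ker η♯, G a complement of K, and Z ∈ ∧²G with Z♯ = −(η|_G♯)⁻¹. For β ∈ I_Z, the 2-form exp_η(β) := η + F(β) has rank k if and only if β vanishes on ∧²K (i.e., β(k₁,k₂) = 0 for all k₁,k₂ ∈ K). -/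
open Module

/-- let `η ∈ ∧²V*` have rank `k`, kernel `K = ker η♯`, `G` a
complement of `K`, `Z ∈ ∧²G` with `Z♯ = -(η|_G♯)⁻¹`, and `β ∈ I_Z` (with `S` a
two-sided inverse of `id + Z♯β♯`).  Then the 2-form `exp_η(β) = η + F(β)` has rank
`k` if and only if `β` vanishes on `∧²K`. -/
theorem rank_exp_eta_iff_horizontal
    (V : Type*) [AddCommGroup V] [Module ℝ V] [FiniteDimensional ℝ V] (k : ℕ)
    (η : V →ₗ[ℝ] Module.Dual ℝ V) (hη : ∀ v w : V, η v w = - η w v)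
    (hrank : Module.finrank ℝ (LinearMap.range η) = k)
    (G : Submodule ℝ V) (hG : IsCompl (LinearMap.ker η) G)
    (Z : Module.Dual ℝ V →ₗ[ℝ] V)
    (hZskew : ∀ ξ χ : Module.Dual ℝ V, ξ (Z χ) = - χ (Z ξ))
    (hZG : ∀ ξ : Module.Dual ℝ V, Z ξ ∈ G)
    (hZann : ∀ ξ : Module.Dual ℝ V, (∀ g ∈ G, ξ g = 0) → Z ξ = 0)
    (hZη : ∀ g ∈ G, Z (η g) = -g)
    (β : V →ₗ[ℝ] Module.Dual ℝ V) (hβ : ∀ v w : V, β v w = - β w v)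
    (S : V →ₗ[ℝ] V)
    (hS₁ : (LinearMap.id + Z ∘ₗ β) ∘ₗ S = LinearMap.id)
    (hS₂ : S ∘ₗ (LinearMap.id + Z ∘ₗ β) = LinearMap.id) :
    Module.finrank ℝ (LinearMap.range (η + β ∘ₗ S)) = k ↔
      ∀ k₁ ∈ LinearMap.ker η, ∀ k₂ ∈ LinearMap.ker η, β k₁ k₂ = 0 := by
  set A : V →ₗ[ℝ] V := LinearMap.id + Z ∘ₗ β with hA
  set E : V →ₗ[ℝ] Module.Dual ℝ V := η + β ∘ₗ S with hE
  set T : V →ₗ[ℝ] Module.Dual ℝ V := E ∘ₗ A with hT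
  -- S is a two-sided inverse of A
  have hSA : ∀ v, S (A v) = v := fun v => by
    have := LinearMap.ext_iff.mp hS₂ v
    simpa using this
  have hAS : ∀ v, A (S v) = v := fun v => by
    have := LinearMap.ext_iff.mp hS₁ v
    simpa using this
  -- formula for T
  have hTv : ∀ v w, T v w = η v w + η (Z (β v)) w + β v w := by
    intro v w
    have : T v = η (v + Z (β v)) + β v := by
      simp only [hT, hE, hA, LinearMap.comp_apply, LinearMap.add_apply, LinearMap.id_apply]
      rw [show (v + Z (β v)) = A v from by simp [hA], hSA]
    rw [this]
    simp [map_add]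
  -- auxiliary computations
  have hZK : ∀ v x, η x = 0 → η (Z (β v)) x = 0 := by
    intro v x hx
    rw [hη]
    simp [hx]
  have hZGcomp : ∀ v, ∀ g ∈ G, η (Z (β v)) g = - β v g := by
    intro v g hg
    rw [hη, hZskew, hZη g hg]
    simp
  -- kernel characterisation of T
  have hker : ∀ v, T v = 0 ↔ (η v = 0 ∧ ∀ x ∈ LinearMap.ker η, β v x = 0) := by
    intro v
    constructor
    · intro h
      have happ : ∀ w, η v w + η (Z (β v)) w + β v w = 0 := by
        intro w
        rw [← hTv v w, h]; rfl
      have hK : ∀ x ∈ LinearMap.ker η, β v x = 0 := by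
        intro x hx
        rw [LinearMap.mem_ker] at hx
        have h1 := happ x
        have h2 : η v x = 0 := by rw [hη]; simp [hx]
        rw [h2, hZK v x hx] at h1
        linarith
      have hGz : ∀ g ∈ G, η v g = 0 := by
        intro g hg
        have h1 := happ g
        rw [hZGcomp v g hg] at h1
        linarith
      refine ⟨?_, hK⟩
      ext w
      obtain ⟨x, hx, g, hg, rfl⟩ := Submodule.mem_sup.mp
        (by rw [hG.sup_eq_top]; trivial : w ∈ LinearMap.ker η ⊔ G)
      rw [LinearMap.mem_ker] at hx
      have h2 : η v x = 0 := by rw [hη]; simp [hx]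
      simp [map_add, h2, hGz g hg]
    · rintro ⟨hv, hK⟩
      ext w
      obtain ⟨x, hx, g, hg, rfl⟩ := Submodule.mem_sup.mp
        (by rw [hG.sup_eq_top]; trivial : w ∈ LinearMap.ker η ⊔ G)
      have hx' : η x = 0 := LinearMap.mem_ker.mp hx
      have h1 : T v (x + g) = η v (x + g) + η (Z (β v)) (x + g) + β v (x + g) :=
        hTv v (x + g)
      have : T v (x + g) = 0 := by
        rw [h1, hv]
        simp only [map_add, hZK v x hx', hZGcomp v g hg, hK x hx, LinearMap.zero_apply]
        ring
      simpa using this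
  -- range E = range T
  have hAsurj : LinearMap.range A = ⊤ := by
    rw [LinearMap.range_eq_top]
    exact fun v => ⟨S v, hAS v⟩
  have hrangeT : LinearMap.range E = LinearMap.range T := by
    rw [hT, LinearMap.range_comp_of_range_eq_top E hAsurj]
  -- kernel of T is contained in kernel of η
  have hkerle : LinearMap.ker T ≤ LinearMap.ker η := by
    intro v hv
    rw [LinearMap.mem_ker] at hv ⊢
    exact ((hker v).mp hv).1
  have hRN_T := LinearMap.finrank_range_add_finrank_ker T
  have hRN_η := LinearMap.finrank_range_add_finrank_ker η
  rw [hE, hrangeT]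
  constructor
  · intro h
    -- ker T and ker η have equal finrank, hence are equal
    have hdim : finrank ℝ (LinearMap.ker T) = finrank ℝ (LinearMap.ker η) := by
      omega
    have heq : LinearMap.ker T = LinearMap.ker η :=
      Submodule.eq_of_le_of_finrank_eq hkerle hdim
    intro k₁ hk₁ k₂ hk₂
    have : k₁ ∈ LinearMap.ker T := heq ▸ hk₁
    exact ((hker k₁).mp (LinearMap.mem_ker.mp this)).2 k₂ hk₂
  · intro h
    have heq : LinearMap.ker T = LinearMap.ker η := by
      refine le_antisymm hkerle ?_
      intro v hv
      rw [LinearMap.mem_ker]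
      exact (hker v).mpr ⟨LinearMap.mem_ker.mp hv, h v hv⟩
    rw [heq] at hRN_T
    omega
end

section
/- Let η ∈ ∧²V* have rank k, kernel K, and let G be a complement of K in V. The map exp_η : β ↦ η + F(β) restricts to a bijection from I_Z ∩ {β : β|_{∧²K} = 0} onto the set of skew-symmetric bilinear forms η' on V of rank k whose kernel ker((η')♯) is transverse to G (i.e., ker((η')♯) ∩ G = 0). -/
/-!
`β ↦ β (1 + Zβ)⁻¹` is a Möbius transformation, inverted by `γ ↦ γ (1 - Zγ)⁻¹`, and for
`η' = η + β (1 + Zβ)⁻¹` the endomorphism `S = 1 - Z(η' - η)` equals `(1 + Zβ)⁻¹`. Now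
`S v = (v + Zηv) - Zη'v` is the splitting of `S v` along `ker η ⊕ G`, because `v + Zηv` is the
`ker η`-component of `v`. So `S` maps `ker η'` into `ker η`, and `S v ∈ ker η` forces `η' v` to
vanish on `G`. If `β` vanishes on `ker η × ker η`, then `η' v` also vanishes on `ker η` whenever
`S v ∈ ker η`, so `S` carries `ker η'` onto `ker η` (rank `k`) and kills `ker η' ∩ G`.
Conversely, if `ker η'` is a complement of `G`, skew-symmetry of `η'` makes `S` injective, and
counting dimensions gives `S (ker η') = ker η`, which is the vanishing of `β = (η' - η) S⁻¹` on
`ker η × ker η`.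
-/

open Module

section Mobius

variable {R V W : Type*} [CommRing R] [AddCommGroup V] [Module R V] [AddCommGroup W] [Module R W]

/-- The paper's `F(β)`; its inverse transformation is `mobius (-Z)`. -/
noncomputable def mobius (Z : W →ₗ[R] V) (β : V →ₗ[R] W) : V →ₗ[R] W :=
  β ∘ₗ Ring.inverse (LinearMap.id + Z ∘ₗ β : Module.End R V)

variable {Z : W →ₗ[R] V} {β : V →ₗ[R] W}

lemma mobius_comp_id_add (h : IsUnit (LinearMap.id + Z ∘ₗ β : Module.End R V)) :
    mobius Z β ∘ₗ (LinearMap.id + Z ∘ₗ β) = β := by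
  rw [mobius, LinearMap.comp_assoc, ← Module.End.mul_eq_comp, Ring.inverse_mul_cancel _ h]
  rfl

lemma id_add_neg_comp_mobius (h : IsUnit (LinearMap.id + Z ∘ₗ β : Module.End R V)) :
    (LinearMap.id + (-Z) ∘ₗ mobius Z β : Module.End R V) =
      Ring.inverse (LinearMap.id + Z ∘ₗ β : Module.End R V) := by
  rw [mobius]
  set T : Module.End R V := LinearMap.id + Z ∘ₗ β with hT
  have hZβ : Z ∘ₗ β = T - 1 := by rw [hT, Module.End.one_eq_id, add_sub_cancel_left]
  rw [LinearMap.neg_comp, ← LinearMap.comp_assoc, hZβ, ← Module.End.mul_eq_comp, sub_mul,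
    Ring.mul_inverse_cancel _ h, one_mul, ← Module.End.one_eq_id]
  abel

lemma isUnit_id_add_neg_comp_mobius (h : IsUnit (LinearMap.id + Z ∘ₗ β : Module.End R V)) :
    IsUnit (LinearMap.id + (-Z) ∘ₗ mobius Z β : Module.End R V) := by
  rw [id_add_neg_comp_mobius h]
  exact h.ringInverse

lemma mobius_neg_mobius (h : IsUnit (LinearMap.id + Z ∘ₗ β : Module.End R V)) :
    mobius (-Z) (mobius Z β) = β := by
  rw [mobius, id_add_neg_comp_mobius h, Ring.inverse_inverse h, mobius_comp_id_add h]

end Mobius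

section Skew

variable {R V : Type*} [CommRing R] [AddCommGroup V] [Module R V]
  {Z : Dual R V →ₗ[R] V} {β : V →ₗ[R] Dual R V}

lemma mobius_skew (hZ : ∀ ξ χ : Dual R V, ξ (Z χ) = -χ (Z ξ)) (hβ : ∀ v w, β v w = -β w v)
    (h : IsUnit (LinearMap.id + Z ∘ₗ β : Module.End R V)) (v w : V) :
    mobius Z β v w = -mobius Z β w v := by
  have hT := ((Module.End.isUnit_iff _).mp h).2
  have key := LinearMap.congr_fun (mobius_comp_id_add h)
  obtain ⟨x, rfl⟩ := hT v
  obtain ⟨y, rfl⟩ := hT w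
  simp only [LinearMap.comp_apply] at key
  rw [key, key]
  simp only [LinearMap.add_apply, LinearMap.id_apply, LinearMap.comp_apply, map_add]
  rw [hβ x y, hZ (β x) (β y)]
  ring

end Skew

section Bivector

variable {R V : Type*} [CommRing R] [AddCommGroup V] [Module R V]
  {η η' β : V →ₗ[R] Dual R V} {G : Submodule R V} {Z : Dual R V →ₗ[R] V}

lemma apply_eq_zero_of_mem_ker (hη : ∀ v w, η v w = -η w v) (v : V) {κ : V}
    (hκ : κ ∈ LinearMap.ker η) : η v κ = 0 := by
  rw [hη, LinearMap.mem_ker.mp hκ, LinearMap.zero_apply, neg_zero]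

lemma add_apply_mem_ker (hG : IsCompl (LinearMap.ker η) G) (hZη : ∀ g ∈ G, Z (η g) = -g)
    (v : V) : v + Z (η v) ∈ LinearMap.ker η := by
  obtain ⟨κ, hκ, g, hg, rfl⟩ := Submodule.mem_sup.mp (hG.sup_eq_top ▸ Submodule.mem_top : v ∈ _)
  rwa [map_add, LinearMap.mem_ker.mp hκ, zero_add, hZη g hg, add_neg_cancel_right]

lemma apply_eq_zero_of_bivector_eq_zero (hZskew : ∀ ξ χ : Dual R V, ξ (Z χ) = -χ (Z ξ))
    (hZη : ∀ g ∈ G, Z (η g) = -g) {ξ : Dual R V} (hξ : Z ξ = 0) {g : V} (hg : g ∈ G) :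
    ξ g = 0 := by
  rw [← neg_neg g, ← hZη g hg, map_neg, hZskew, hξ, map_zero, neg_zero, neg_zero]

lemma id_add_neg_comp_apply_mem_iff (hZG : ∀ ξ, Z ξ ∈ G) (γ : V →ₗ[R] Dual R V) (v : V) :
    (LinearMap.id + (-Z) ∘ₗ γ : Module.End R V) v ∈ G ↔ v ∈ G := by
  simpa [← sub_eq_add_neg] using Submodule.sub_mem_iff_left G (hZG (γ v))

lemma map_ker_le (hG : IsCompl (LinearMap.ker η) G) (hZη : ∀ g ∈ G, Z (η g) = -g) :
    (LinearMap.ker η').map (LinearMap.id + (-Z) ∘ₗ (η' - η)) ≤ LinearMap.ker η := by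
  rintro _ ⟨v, hv, rfl⟩
  simpa [LinearMap.mem_ker.mp hv, ← sub_eq_add_neg] using add_apply_mem_ker hG hZη v

lemma apply_eq_zero_on_of_mem_ker (hG : IsCompl (LinearMap.ker η) G) (hZG : ∀ ξ, Z ξ ∈ G)
    (hZskew : ∀ ξ χ : Dual R V, ξ (Z χ) = -χ (Z ξ)) (hZη : ∀ g ∈ G, Z (η g) = -g) {v : V}
    (hv : (LinearMap.id + (-Z) ∘ₗ (η' - η) : Module.End R V) v ∈ LinearMap.ker η)
    {g : V} (hg : g ∈ G) :
    η' v g = 0 := by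
  have hdecomp :
      Z (η' v) = (v + Z (η v)) - (LinearMap.id + (-Z) ∘ₗ (η' - η) : Module.End R V) v := by
    simp only [LinearMap.add_apply, LinearMap.id_apply, LinearMap.comp_apply, LinearMap.sub_apply,
      LinearMap.neg_apply, map_sub]
    abel
  have hker : Z (η' v) ∈ LinearMap.ker η := hdecomp ▸ sub_mem (add_apply_mem_ker hG hZη v) hv
  have hZ0 : Z (η' v) = 0 := Submodule.disjoint_def.mp hG.disjoint _ hker (hZG _)
  exact apply_eq_zero_of_bivector_eq_zero hZskew hZη hZ0 hg

lemma map_ker_eq_of_isUnit (hη : ∀ v w, η v w = -η w v) (hG : IsCompl (LinearMap.ker η) G)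
    (hZG : ∀ ξ, Z ξ ∈ G) (hZskew : ∀ ξ χ : Dual R V, ξ (Z χ) = -χ (Z ξ))
    (hZη : ∀ g ∈ G, Z (η g) = -g)
    (hS : IsUnit (LinearMap.id + (-Z) ∘ₗ (η' - η) : Module.End R V))
    (hKK : ∀ κ₁ ∈ LinearMap.ker η, ∀ κ₂ ∈ LinearMap.ker η, mobius (-Z) (η' - η) κ₁ κ₂ = 0) :
    (LinearMap.ker η').map (LinearMap.id + (-Z) ∘ₗ (η' - η) : Module.End R V) =
      LinearMap.ker η := by
  refine le_antisymm (map_ker_le hG hZη) fun κ hκ => ?_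
  obtain ⟨v, rfl⟩ := ((Module.End.isUnit_iff _).mp hS).2 κ
  refine ⟨v, LinearMap.mem_ker.mpr ?_, rfl⟩
  refine LinearMap.ext_on_codisjoint hG.codisjoint (fun κ₂ hκ₂ => ?_)
    (fun g hg => apply_eq_zero_on_of_mem_ker hG hZG hZskew hZη hκ hg)
  have h := hKK _ hκ κ₂ hκ₂
  rw [← LinearMap.comp_apply, mobius_comp_id_add hS] at h
  simpa [apply_eq_zero_of_mem_ker hη v hκ₂] using h

lemma disjoint_ker_of_injective (hG : IsCompl (LinearMap.ker η) G) (hZG : ∀ ξ, Z ξ ∈ G)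
    (hZη : ∀ g ∈ G, Z (η g) = -g)
    (hS : Function.Injective (LinearMap.id + (-Z) ∘ₗ (η' - η) : Module.End R V)) :
    Disjoint (LinearMap.ker η') G := by
  refine Submodule.disjoint_def.mpr fun v hv hvG => hS ?_
  rw [map_zero]
  exact Submodule.disjoint_def.mp hG.disjoint _ (map_ker_le hG hZη ⟨v, hv, rfl⟩)
    ((id_add_neg_comp_apply_mem_iff hZG _ v).mpr hvG)

lemma disjoint_ker_add_mobius (hG : IsCompl (LinearMap.ker η) G) (hZG : ∀ ξ, Z ξ ∈ G)
    (hZη : ∀ g ∈ G, Z (η g) = -g) (hT : IsUnit (LinearMap.id + Z ∘ₗ β : Module.End R V)) :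
    Disjoint (LinearMap.ker (η + mobius Z β)) G := by
  have hS := isUnit_id_add_neg_comp_mobius hT
  rw [← add_sub_cancel_left η (mobius Z β)] at hS
  exact disjoint_ker_of_injective hG hZG hZη ((Module.End.isUnit_iff _).mp hS).1

end Bivector

section Transversal

variable {𝕜 V : Type*} [Field 𝕜] [AddCommGroup V] [Module 𝕜 V]
  {η η' β : V →ₗ[𝕜] Dual 𝕜 V} {G : Submodule 𝕜 V} {Z : Dual 𝕜 V →ₗ[𝕜] V}

lemma finrank_range_eq_iff [FiniteDimensional 𝕜 V] :
    finrank 𝕜 (LinearMap.range η') = finrank 𝕜 (LinearMap.range η) ↔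
      finrank 𝕜 (LinearMap.ker η') = finrank 𝕜 (LinearMap.ker η) := by
  have := η.finrank_range_add_finrank_ker
  have := η'.finrank_range_add_finrank_ker
  omega

lemma finrank_map_eq_of_isUnit {f : Module.End 𝕜 V} (hf : IsUnit f) (p : Submodule 𝕜 V) :
    finrank 𝕜 (p.map f) = finrank 𝕜 p :=
  LinearEquiv.finrank_map_eq (LinearEquiv.ofBijective f ((Module.End.isUnit_iff f).mp hf)) p

lemma isUnit_of_finrank_range_eq [FiniteDimensional 𝕜 V] (hG : IsCompl (LinearMap.ker η) G)
    (hZG : ∀ ξ, Z ξ ∈ G) (hZskew : ∀ ξ χ : Dual 𝕜 V, ξ (Z χ) = -χ (Z ξ))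
    (hZη : ∀ g ∈ G, Z (η g) = -g) (hη' : ∀ v w, η' v w = -η' w v)
    (hrank : finrank 𝕜 (LinearMap.range η') = finrank 𝕜 (LinearMap.range η))
    (hdisj : Disjoint (LinearMap.ker η') G) :
    IsUnit (LinearMap.id + (-Z) ∘ₗ (η' - η) : Module.End 𝕜 V) := by
  have hcompl : IsCompl (LinearMap.ker η') G := by
    refine (Submodule.isCompl_iff_disjoint _ _ ?_).mpr hdisj
    rw [finrank_range_eq_iff.mp hrank, Submodule.finrank_add_eq_of_isCompl hG]
  have hinj : Function.Injective (LinearMap.id + (-Z) ∘ₗ (η' - η) : Module.End 𝕜 V) := by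
    refine (injective_iff_map_eq_zero _).mpr fun v hv => ?_
    have hvG : v ∈ G := (id_add_neg_comp_apply_mem_iff hZG _ v).mp (hv ▸ G.zero_mem)
    have hv' : η' v = 0 :=
      LinearMap.ext_on_codisjoint hcompl.codisjoint (fun u hu => apply_eq_zero_of_mem_ker hη' v hu)
        (fun g hg => apply_eq_zero_on_of_mem_ker hG hZG hZskew hZη (hv ▸ Submodule.zero_mem _) hg)
    exact Submodule.disjoint_def.mp hcompl.disjoint v hv' hvG
  exact (Module.End.isUnit_iff _).mpr ⟨hinj, LinearMap.injective_iff_surjective.mp hinj⟩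

lemma mobius_neg_apply_ker_eq_zero [FiniteDimensional 𝕜 V] (hη : ∀ v w, η v w = -η w v)
    (hG : IsCompl (LinearMap.ker η) G) (hZη : ∀ g ∈ G, Z (η g) = -g)
    (hS : IsUnit (LinearMap.id + (-Z) ∘ₗ (η' - η) : Module.End 𝕜 V))
    (hrank : finrank 𝕜 (LinearMap.range η') = finrank 𝕜 (LinearMap.range η))
    {κ₁ : V} (hκ₁ : κ₁ ∈ LinearMap.ker η) {κ₂ : V} (hκ₂ : κ₂ ∈ LinearMap.ker η) :
    mobius (-Z) (η' - η) κ₁ κ₂ = 0 := by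
  have hmap := Submodule.eq_of_le_of_finrank_eq (map_ker_le hG hZη)
    ((finrank_map_eq_of_isUnit hS _).trans (finrank_range_eq_iff.mp hrank))
  obtain ⟨v, hv, rfl⟩ := hmap ▸ hκ₁
  rw [← LinearMap.comp_apply, mobius_comp_id_add hS]
  simp [LinearMap.mem_ker.mp hv, apply_eq_zero_of_mem_ker hη v hκ₂]

lemma finrank_ker_add_mobius (hη : ∀ v w, η v w = -η w v) (hG : IsCompl (LinearMap.ker η) G)
    (hZG : ∀ ξ, Z ξ ∈ G) (hZskew : ∀ ξ χ : Dual 𝕜 V, ξ (Z χ) = -χ (Z ξ))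
    (hZη : ∀ g ∈ G, Z (η g) = -g) (hT : IsUnit (LinearMap.id + Z ∘ₗ β : Module.End 𝕜 V))
    (hKK : ∀ κ₁ ∈ LinearMap.ker η, ∀ κ₂ ∈ LinearMap.ker η, β κ₁ κ₂ = 0) :
    finrank 𝕜 (LinearMap.ker (η + mobius Z β)) = finrank 𝕜 (LinearMap.ker η) := by
  have hγ : η + mobius Z β - η = mobius Z β := add_sub_cancel_left η (mobius Z β)
  have hS : IsUnit (LinearMap.id + (-Z) ∘ₗ (η + mobius Z β - η) : Module.End 𝕜 V) := by
    rw [hγ]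
    exact isUnit_id_add_neg_comp_mobius hT
  rw [← map_ker_eq_of_isUnit hη hG hZG hZskew hZη hS (by rwa [hγ, mobius_neg_mobius hT]),
    finrank_map_eq_of_isUnit hS]

end Transversal

theorem exp_eta_bijection_general
    (V : Type*) [AddCommGroup V] [Module ℝ V] [FiniteDimensional ℝ V] (k : ℕ)
    (η : V →ₗ[ℝ] Module.Dual ℝ V) (hη : ∀ v w : V, η v w = - η w v)
    (hrank : Module.finrank ℝ (LinearMap.range η) = k)
    (G : Submodule ℝ V) (hG : IsCompl (LinearMap.ker η) G)
    (Z : Module.Dual ℝ V →ₗ[ℝ] V)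
    (hZskew : ∀ ξ χ : Module.Dual ℝ V, ξ (Z χ) = - χ (Z ξ))
    (hZG : ∀ ξ : Module.Dual ℝ V, Z ξ ∈ G)
    (hZη : ∀ g ∈ G, Z (η g) = -g) :
    Set.BijOn
      (fun β : V →ₗ[ℝ] Module.Dual ℝ V =>
        η + β ∘ₗ (Ring.inverse ((LinearMap.id + Z ∘ₗ β : V →ₗ[ℝ] V) : Module.End ℝ V) : V →ₗ[ℝ] V))
      {β : V →ₗ[ℝ] Module.Dual ℝ V |
        (∀ v w : V, β v w = - β w v) ∧
        Function.Bijective ⇑(LinearMap.id + Z ∘ₗ β : V →ₗ[ℝ] V) ∧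
        ∀ k₁ ∈ LinearMap.ker η, ∀ k₂ ∈ LinearMap.ker η, β k₁ k₂ = 0}
      {η' : V →ₗ[ℝ] Module.Dual ℝ V |
        (∀ v w : V, η' v w = - η' w v) ∧
        Module.finrank ℝ (LinearMap.range η') = k ∧
        Disjoint (LinearMap.ker η') G} := by
  have hZneg : ∀ ξ χ : Dual ℝ V, ξ ((-Z) χ) = -χ ((-Z) ξ) := fun ξ χ => by simp [hZskew ξ χ]
  refine Set.InvOn.bijOn (f' := fun η' => mobius (-Z) (η' - η))
    ⟨fun β ⟨_, hT, _⟩ => ?_, fun η' ⟨hη', hrank', hdisj⟩ => ?_⟩ ?_ ?_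
  · have hT : IsUnit (LinearMap.id + Z ∘ₗ β : Module.End ℝ V) := (Module.End.isUnit_iff _).mpr hT
    exact (congrArg (mobius (-Z)) (add_sub_cancel_left η _)).trans (mobius_neg_mobius hT)
  · have hS := isUnit_of_finrank_range_eq hG hZG hZskew hZη hη' (hrank'.trans hrank.symm) hdisj
    have hinv := neg_neg Z ▸ mobius_neg_mobius hS
    exact (congrArg (η + ·) hinv).trans (add_sub_cancel η η')
  · rintro β ⟨hβ, hT, hKK⟩
    have hT : IsUnit (LinearMap.id + Z ∘ₗ β : Module.End ℝ V) := (Module.End.isUnit_iff _).mpr hT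
    refine ⟨fun v w => ?_, ?_, disjoint_ker_add_mobius hG hZG hZη hT⟩
    · change η v w + mobius Z β v w = -(η w v + mobius Z β w v)
      rw [hη v w, mobius_skew hZskew hβ hT v w, neg_add]
    · exact hrank ▸ finrank_range_eq_iff.mpr (finrank_ker_add_mobius hη hG hZG hZskew hZη hT hKK)
  · rintro η' ⟨hη', hrank', hdisj⟩
    have hrank'' := hrank'.trans hrank.symm
    have hS := isUnit_of_finrank_range_eq hG hZG hZskew hZη hη' hrank'' hdisj
    refine ⟨mobius_skew hZneg (fun v w => ?_) hS, ?_,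
      fun κ₁ hκ₁ κ₂ hκ₂ => mobius_neg_apply_ker_eq_zero hη hG hZη hS hrank'' hκ₁ hκ₂⟩
    · simp only [LinearMap.sub_apply, hη' v w, hη v w]
      ring
    · have hT := isUnit_id_add_neg_comp_mobius hS
      rw [neg_neg] at hT
      exact (Module.End.isUnit_iff _).mp hT

/-- let `η ∈ ∧²V*` have rank `k`, kernel `K`, `G` a complement of `K`
and `Z ∈ ∧²G` with `Z♯ = -(η|_G♯)⁻¹`.  The map `exp_η : β ↦ η + F(β)`, where
`F(β)♯ = β♯ ∘ (id + Z♯β♯)⁻¹`, restricts to a bijection from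
`I_Z ∩ {β skew : β|_{∧²K} = 0}` onto the set of skew-symmetric bilinear forms of
rank `k` whose kernel is transverse to `G`. -/
theorem exp_eta_bijection
    (V : Type*) [AddCommGroup V] [Module ℝ V] [FiniteDimensional ℝ V] (k : ℕ)
    (η : V →ₗ[ℝ] Module.Dual ℝ V) (hη : ∀ v w : V, η v w = - η w v)
    (hrank : Module.finrank ℝ (LinearMap.range η) = k)
    (G : Submodule ℝ V) (hG : IsCompl (LinearMap.ker η) G)
    (Z : Module.Dual ℝ V →ₗ[ℝ] V)
    (hZskew : ∀ ξ χ : Module.Dual ℝ V, ξ (Z χ) = - χ (Z ξ))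
    (hZG : ∀ ξ : Module.Dual ℝ V, Z ξ ∈ G)
    (hZann : ∀ ξ : Module.Dual ℝ V, (∀ g ∈ G, ξ g = 0) → Z ξ = 0)
    (hZη : ∀ g ∈ G, Z (η g) = -g) :
    Set.BijOn
      (fun β : V →ₗ[ℝ] Module.Dual ℝ V =>
        η + β ∘ₗ (Ring.inverse ((LinearMap.id + Z ∘ₗ β : V →ₗ[ℝ] V) : Module.End ℝ V) : V →ₗ[ℝ] V))
      {β : V →ₗ[ℝ] Module.Dual ℝ V |
        (∀ v w : V, β v w = - β w v) ∧
        Function.Bijective ⇑(LinearMap.id + Z ∘ₗ β : V →ₗ[ℝ] V) ∧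
        ∀ k₁ ∈ LinearMap.ker η, ∀ k₂ ∈ LinearMap.ker η, β k₁ k₂ = 0}
      {η' : V →ₗ[ℝ] Module.Dual ℝ V |
        (∀ v w : V, η' v w = - η' w v) ∧
        Module.finrank ℝ (LinearMap.range η') = k ∧
        Disjoint (LinearMap.ker η') G} :=
  exp_eta_bijection_general V k η hη hrank G hG Z hZskew hZG hZη
end

section
/- Let η ∈ ∧²V* with kernel K and complement G, and Z ∈ ∧²G with Z♯ = −(η|_G♯)⁻¹. For β ∈ I_Z, the 2-form exp_η(β) = η + F(β) restricted to ∧²G equals (η + F(σ))|_{∧²G} when β = (μ,σ) ∈ (K*⊗G*) ⊕ ∧²G*; in particular, the restriction of exp_η(β) to G is non-degenerate for every β ∈ I_Z. -/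
open Module

/-- let `η ∈ ∧²V*` with kernel `K`, `G` a complement of `K`, and
`Z ∈ ∧²G` with `Z♯ = -(η|_G♯)⁻¹`.  Let `β ∈ I_Z` (with two-sided inverse `S` of
`id + Z♯β♯`) be horizontal, decomposed as `β = μ + σ` with mixed part
`μ ∈ K*⊗G*` and `σ ∈ ∧²G*`.  Then `σ ∈ I_Z`, the restriction of
`exp_η(β) = η + F(β)` to `∧²G` equals the restriction of `η + F(σ)` (with `F(σ)`
computed with the same `Z`), and in particular the restriction of `exp_η(β)` to
`G` is non-degenerate. -/
theorem exp_eta_restriction_to_G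
    (V : Type*) [AddCommGroup V] [Module ℝ V] [FiniteDimensional ℝ V]
    (η : V →ₗ[ℝ] Module.Dual ℝ V) (hη : ∀ v w : V, η v w = - η w v)
    (G : Submodule ℝ V) (hG : IsCompl (LinearMap.ker η) G)
    (Z : Module.Dual ℝ V →ₗ[ℝ] V)
    (hZskew : ∀ ξ χ : Module.Dual ℝ V, ξ (Z χ) = - χ (Z ξ))
    (hZG : ∀ ξ : Module.Dual ℝ V, Z ξ ∈ G)
    (hZann : ∀ ξ : Module.Dual ℝ V, (∀ g ∈ G, ξ g = 0) → Z ξ = 0)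
    (hZη : ∀ g ∈ G, Z (η g) = -g)
    (β μ σ : V →ₗ[ℝ] Module.Dual ℝ V) (hβ : ∀ v w : V, β v w = - β w v)
    (hβdec : β = μ + σ)
    (hμG : ∀ g ∈ G, ∀ g' ∈ G, μ g g' = 0)
    (hμK : ∀ k₁ ∈ LinearMap.ker η, ∀ k₂ ∈ LinearMap.ker η, μ k₁ k₂ = 0)
    (hσK : ∀ k ∈ LinearMap.ker η, ∀ v : V, σ k v = 0 ∧ σ v k = 0)
    (S : V →ₗ[ℝ] V)
    (hS₁ : (LinearMap.id + Z ∘ₗ β) ∘ₗ S = LinearMap.id)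
    (hS₂ : S ∘ₗ (LinearMap.id + Z ∘ₗ β) = LinearMap.id) :
    Function.Bijective ⇑(LinearMap.id + Z ∘ₗ σ : V →ₗ[ℝ] V) ∧
    (∀ g ∈ G, ∀ g' ∈ G,
      (η + β ∘ₗ S) g g' =
        (η + σ ∘ₗ (Ring.inverse ((LinearMap.id + Z ∘ₗ σ : V →ₗ[ℝ] V) : Module.End ℝ V) :
          V →ₗ[ℝ] V)) g g') ∧
    (∀ g ∈ G, (∀ g' ∈ G, (η + β ∘ₗ S) g g' = 0) → g = 0) := by
  set K := LinearMap.ker η with hK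
  set B : V →ₗ[ℝ] V := LinearMap.id + Z ∘ₗ σ with hB
  -- Z kills μ applied to vectors of G
  have hZμ : ∀ s ∈ G, Z (μ s) = 0 := fun s hs =>
    hZann (μ s) (fun g' hg' => hμG s hs g' hg')
  -- on G, Zβ = Zσ
  have hZβσ : ∀ s ∈ G, Z (β s) = Z (σ s) := by
    intro s hs
    rw [hβdec]
    simp [map_add, hZμ s hs]
  -- key identity: η(Zξ) g' = -ξ g' for g' ∈ G
  have hηZ : ∀ (ξ : Module.Dual ℝ V), ∀ g' ∈ G, (η (Z ξ)) g' = - ξ g' := by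
    intro ξ g' hg'
    have h1 : Z (η (Z ξ)) = -(Z ξ) := hZη (Z ξ) (hZG ξ)
    have h2 : Z (η g') = -g' := hZη g' hg'
    have hg'eq : g' = -(Z (η g')) := by rw [h2, neg_neg]
    calc (η (Z ξ)) g' = (η (Z ξ)) (-(Z (η g'))) := by rw [← hg'eq]
      _ = -((η (Z ξ)) (Z (η g'))) := by rw [map_neg]
      _ = -(-((η g') (Z (η (Z ξ))))) := by rw [hZskew (η (Z ξ)) (η g')]
      _ = (η g') (Z (η (Z ξ))) := by ring
      _ = (η g') (-(Z ξ)) := by rw [h1]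
      _ = -((η g') (Z ξ)) := by rw [map_neg]
      _ = -(-(ξ (Z (η g')))) := by rw [hZskew (η g') ξ]
      _ = ξ (Z (η g')) := by ring
      _ = ξ (-g') := by rw [h2]
      _ = - ξ g' := by rw [map_neg]
  -- S maps G to G
  have hSg_eq : ∀ g : V, S g + Z (β (S g)) = g := by
    intro g
    have := DFunLike.congr_fun hS₁ g
    simpa using this
  have hSG : ∀ g ∈ G, S g ∈ G := by
    intro g hg
    have hmem : S g ∈ K ⊔ G := by rw [hG.sup_eq_top]; trivial
    obtain ⟨k, hk, h, hh, hkh⟩ := Submodule.mem_sup.mp hmem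
    have hkeq : k = g - Z (β (S g)) - h := by
      have := hSg_eq g
      rw [← hkh] at this ⊢
      linear_combination (norm := module) this
    have hkG : k ∈ G := by
      rw [hkeq]
      exact Submodule.sub_mem G (Submodule.sub_mem G hg (hZG _)) hh
    have hk0 : k = 0 := Submodule.disjoint_def.mp hG.disjoint k hk hkG
    rw [← hkh, hk0, zero_add]; exact hh
  -- B agrees with (1 + Zβ) on G
  have hBA : ∀ s ∈ G, B s = s + Z (β s) := by
    intro s hs
    simp [hB, hZβσ s hs]
  -- σ kills K on the left
  have hσK' : ∀ k ∈ K, σ k = 0 := by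
    intro k hk
    ext v
    exact (hσK k hk v).1
  -- injectivity of B
  have hinj : Function.Injective B := by
    rw [← LinearMap.ker_eq_bot]
    rw [LinearMap.ker_eq_bot']
    intro v hv
    have hv' : v + Z (σ v) = 0 := by simpa [hB] using hv
    have hvG : v ∈ G := by
      have : v = -(Z (σ v)) := by linear_combination (norm := module) hv'
      rw [this]; exact Submodule.neg_mem G (hZG _)
    have hAv : v + Z (β v) = 0 := by rw [hZβσ v hvG]; exact hv'
    have := DFunLike.congr_fun hS₂ v
    simp only [LinearMap.comp_apply, LinearMap.add_apply, LinearMap.id_apply] at this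
    rw [hAv] at this
    simpa using this.symm
  have hbij : Function.Bijective B :=
    ⟨hinj, (LinearMap.injective_iff_surjective).mp hinj⟩
  have hunit : IsUnit (B : Module.End ℝ V) := (Module.End.isUnit_iff _).mpr hbij
  set T : V →ₗ[ℝ] V := (Ring.inverse (B : Module.End ℝ V) : V →ₗ[ℝ] V) with hT
  have hBT : ∀ v : V, B (T v) = v := by
    intro v
    have h := Ring.mul_inverse_cancel (B : Module.End ℝ V) hunit
    have := DFunLike.congr_fun h v
    simpa [Module.End.mul_apply] using this
  -- T = S on G
  have hTS : ∀ g ∈ G, T g = S g := by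
    intro g hg
    apply hinj
    rw [hBT g, hBA (S g) (hSG g hg), hSg_eq g]
  refine ⟨hbij, ?_, ?_⟩
  · intro g hg g' hg'
    simp only [LinearMap.add_apply, LinearMap.comp_apply]
    rw [hTS g hg, hβdec]
    simp [hμG (S g) (hSG g hg) g' hg']
  · intro g hg hzero
    have hsG : S g ∈ G := hSG g hg
    have hgeq : g = S g + Z (σ (S g)) := by
      rw [← hZβσ (S g) hsG]; exact (hSg_eq g).symm
    -- η (S g) vanishes on G
    have hηS : ∀ g' ∈ G, η (S g) g' = 0 := by
      intro g' hg'
      have h0 := hzero g' hg'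
      simp only [LinearMap.add_apply, LinearMap.comp_apply] at h0
      have hβval : β (S g) g' = σ (S g) g' := by
        rw [hβdec]; simp [hμG (S g) hsG g' hg']
      have hηg : η g g' = η (S g) g' - σ (S g) g' := by
        conv_lhs => rw [hgeq]
        rw [map_add, LinearMap.add_apply, hηZ (σ (S g)) g' hg']
        ring
      rw [hηg, hβval] at h0
      linarith
    -- hence S g ∈ ker η
    have hSK : S g ∈ K := by
      rw [hK, LinearMap.mem_ker]
      ext v
      have hmem : v ∈ K ⊔ G := by rw [hG.sup_eq_top]; trivial
      obtain ⟨k, hk, h, hh, hkh⟩ := Submodule.mem_sup.mp hmem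
      have hηk : η (S g) k = 0 := by
        rw [hη (S g) k]
        have : η k = 0 := LinearMap.mem_ker.mp hk
        simp [this]
      rw [← hkh]
      simp [map_add, hηk, hηS h hh]
    have hS0 : S g = 0 := Submodule.disjoint_def.mp hG.disjoint (S g) hSK hsG
    rw [hgeq, hS0]
    simp
end
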